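/- For every permutation w ∈ S_n, the transpose map P ↦ Pᵀ is a poset anti-isomorphism from the chute move poset PD(w) to the chute move poset PD(w⁻¹). -/

import Mathlib

open Classical

noncomputable section

/-- 1-based value of a permutation of `Fin n` at a 1-based position `j`. -/
def permVal {n : ℕ} (w : Equiv.Perm (Fin n)) (j : ℕ) : ℕ :=
  if h : 1 ≤ j ∧ j ≤ n then (w ⟨j - 1, by omega⟩ : ℕ) + 1 else 0

/-- `(i,j)` is an inversion of `w`: `1 ≤ i < j ≤ n` and the (1-based) position of the
value `j` in the one-line notation of `w` precedes that of `i`. -/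
def IsInv {n : ℕ} (w : Equiv.Perm (Fin n)) (i j : ℕ) : Prop :=
  1 ≤ i ∧ i < j ∧ j ≤ n ∧ permVal w.symm j < permVal w.symm i

/-- Lehmer form entry at box `(i,j)`: the number of `k ∈ [1, T(i,j)-1]` that do not
appear below box `(i,j)` in column `j`. -/
def lehmer (T : ℕ → ℕ → ℕ) (i j : ℕ) : ℕ :=
  ((Finset.Ico 1 (T i j)).filter fun k => ∀ i', 1 ≤ i' → i' < i → T i' j ≠ k).card

/-- Incrementing box `(i,j)` of `T` yields `T'`:  with `a = T(i,j)` and `b` the smallest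
integer greater than `a` not appearing below `(i,j)` in column `j`, either a pure
increment (if `b` is absent from column `j`) or a trade increment (swap `a` and `b`). -/
def IncrementAt (T T' : ℕ → ℕ → ℕ) (i j : ℕ) : Prop :=
  ∃ b, T i j < b ∧
    (∀ k, T i j < k → k < b → ∃ i', 1 ≤ i' ∧ i' < i ∧ T i' j = k) ∧
    (∀ i', 1 ≤ i' → i' < i → T i' j ≠ b) ∧
    (((∀ i', 1 ≤ i' → T i' j ≠ b) ∧
        T' = fun a c => if a = i ∧ c = j then b else T a c) ∨
      (∃ i'', i < i'' ∧ T i'' j = b ∧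
        T' = fun a c =>
          if a = i ∧ c = j then b else if a = i'' ∧ c = j then T i j else T a c))

/-- `IncBy M T T'`: `T'` is obtained from `T` by incrementing each box of the
multiset `M` (with multiplicity). -/
inductive IncBy : Multiset (ℕ × ℕ) → (ℕ → ℕ → ℕ) → (ℕ → ℕ → ℕ) → Prop
  | nil (T : ℕ → ℕ → ℕ) : IncBy 0 T T
  | cons {M : Multiset (ℕ × ℕ)} {T T' T'' : ℕ → ℕ → ℕ} {i j : ℕ} :
      IncrementAt T T' i j → IncBy M T' T'' → IncBy ((i, j) ::ₘ M) T T''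

/-- Column-injective tableau for `w`: a box has a nonzero entry iff it is an inversion
of `w`, and the nonzero entries in each column are distinct. -/
def ColInj {n : ℕ} (w : Equiv.Perm (Fin n)) (T : ℕ → ℕ → ℕ) : Prop :=
  (∀ i j, T i j ≠ 0 ↔ IsInv w i j) ∧
  ∀ i i' j, 1 ≤ i → i < i' → i' < j → T i j ≠ 0 → T i' j ≠ 0 → T i j ≠ T i' j

/-- The Λ-shape `Λ(i,j,k)` is balanced in `T`. -/
def LBal (T : ℕ → ℕ → ℕ) (i j k : ℕ) : Prop :=
  min (T i j) (T j k) ≤ T i k ∧ T i k ≤ max (T i j) (T j k)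

/-- Every Λ-shape of `Δ_{n-1}` is balanced in `T`. -/
def BalancedTab (n : ℕ) (T : ℕ → ℕ → ℕ) : Prop :=
  ∀ i j k, 1 ≤ i → i < j → j < k → k ≤ n → LBal T i j k

/-- Inversions tableau for `w`: balanced column-injective tableau whose entries in
row `i` are at most `i`. -/
def InvTab {n : ℕ} (w : Equiv.Perm (Fin n)) (T : ℕ → ℕ → ℕ) : Prop :=
  ColInj w T ∧ BalancedTab n T ∧ ∀ i j, T i j ≤ i

/-- The multiset of entries of `T` on `hook(i,k)`. -/
def hookEntries (T : ℕ → ℕ → ℕ) (i k : ℕ) : Multiset ℕ :=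
  (T i k ::ₘ (Finset.Ioo i k).val.map fun r => T r k) +
    (Finset.Ioo i k).val.map fun c => T i c

/-- The median ((k-i)-th smallest of the `2(k-i)-1` entries) of the hook of `(i,k)`. -/
def hookMedian (T : ℕ → ℕ → ℕ) (i k : ℕ) : ℕ :=
  ((hookEntries T i k).sort (· ≤ ·)).getD (k - i - 1) 0

/-! ## Pipe dreams

A pipe dream in the staircase `Δ_n` is encoded by `P : ℕ → ℕ → Bool`, where
`P i j = true` means box `(i,j)` (row `i` from the top, column `j` from the left,
with `1 ≤ i, j` and `i + j ≤ n`) is a cross tile, and `false` means a bump tile;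
boxes on the southeast boundary (`i + j = n + 1`) are elbow tiles. -/

/-- `labels n P i j` is the pair (label of the north edge, label of the east edge) of
the pipes passing through box `(i,j)`:  pipes enter at row `k` on the west side with
label `k` and propagate through cross, bump and elbow tiles. -/
def labels (n : ℕ) (P : ℕ → ℕ → Bool) (i j : ℕ) : ℕ × ℕ :=
  let west := if _h1 : j ≤ 1 then i else (labels n P i (j - 1)).2
  if _h : i + j ≤ n then
    if P i j then ((labels n P (i + 1) j).1, west)
    else (west, (labels n P (i + 1) j).1)
  else (west, west)
termination_by (n + 1 - i) + j
decreasing_by all_goals omega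

def northLabel (n : ℕ) (P : ℕ → ℕ → Bool) (i j : ℕ) : ℕ := (labels n P i j).1

def westLabel (n : ℕ) (P : ℕ → ℕ → Bool) (i j : ℕ) : ℕ :=
  if j ≤ 1 then i else (labels n P i (j - 1)).2

def southLabel (n : ℕ) (P : ℕ → ℕ → Bool) (i j : ℕ) : ℕ := (labels n P (i + 1) j).1

/-- Pipes `p` and `q` cross at box `(i,j)` of `P`. -/
def CrossAt (n : ℕ) (P : ℕ → ℕ → Bool) (i j p q : ℕ) : Prop :=
  1 ≤ i ∧ 1 ≤ j ∧ i + j ≤ n ∧ P i j = true ∧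
    ((westLabel n P i j = p ∧ southLabel n P i j = q) ∨
      (westLabel n P i j = q ∧ southLabel n P i j = p))

/-- `P` is a pipe dream for `w`: crosses lie in the staircase, and reading the pipe
labels along the north side gives the one-line notation of `w`. -/
def IsPD {n : ℕ} (w : Equiv.Perm (Fin n)) (P : ℕ → ℕ → Bool) : Prop :=
  (∀ i j, P i j = true → 1 ≤ i ∧ 1 ≤ j ∧ i + j ≤ n) ∧
    ∀ j, 1 ≤ j → j ≤ n → northLabel n P 1 j = permVal w j

/-- `P` is reduced: no two pipes cross more than once. -/
def Reduced (n : ℕ) (P : ℕ → ℕ → Bool) : Prop :=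
  ∀ p q i j i' j', CrossAt n P i j p q → CrossAt n P i' j' p q → i = i' ∧ j = j'

/-- The set of reduced pipe dreams for `w`. -/
def RPD {n : ℕ} (w : Equiv.Perm (Fin n)) :=
  { P : ℕ → ℕ → Bool // IsPD w P ∧ Reduced n P }

/-- `R` is a rectangle (rows `a < b`, columns `c < d`) in which a chute move of `P`
can take place: `NW(R)=(a,c)` and `SW(R)=(b,c)` are bumps, `SE(R)=(b,d)` is a bump or
elbow, and all other boxes of `R` are crosses. -/
def IsChuteRect (n : ℕ) (P : ℕ → ℕ → Bool) (a b c d : ℕ) : Prop :=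
  1 ≤ a ∧ a < b ∧ 1 ≤ c ∧ c < d ∧ b + d ≤ n + 1 ∧
    P a c = false ∧ P b c = false ∧ P b d = false ∧
    ∀ i j, a ≤ i → i ≤ b → c ≤ j → j ≤ d →
      ¬(i = a ∧ j = c) → ¬(i = b ∧ j = c) → ¬(i = b ∧ j = d) → P i j = true

/-- The result of the chute move in the rectangle with corners `(a,c)`, `(b,d)`:
the bump at `SW=(b,c)` becomes a cross and the cross at `NE=(a,d)` becomes a bump. -/
def chuteResult (P : ℕ → ℕ → Bool) (a b c d : ℕ) : ℕ → ℕ → Bool :=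
  fun i j => if i = b ∧ j = c then true else if i = a ∧ j = d then false else P i j

/-- `P'` is obtained from `P` by a single chute move. -/
def ChuteStep (n : ℕ) (P P' : ℕ → ℕ → Bool) : Prop :=
  ∃ a b c d, IsChuteRect n P a b c d ∧ P' = chuteResult P a b c d

/-- The chute move order on `RPD w`: `P ≤ Q` iff `Q` is obtained from `P`
by a sequence of chute moves. -/
def chuteLE {n : ℕ} (w : Equiv.Perm (Fin n)) (P Q : RPD w) : Prop :=
  Relation.ReflTransGen (fun X Y : RPD w => ChuteStep n X.1 Y.1) P Q

/-- `theta n P p q` is the index of the row in which pipes `p` and `q` cross in `P`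
(`0` if they do not cross).  For `P ∈ PD(w)` reduced, `theta n P` is the inversions
tableau `Θ(P)`. -/
def theta (n : ℕ) (P : ℕ → ℕ → Bool) (p q : ℕ) : ℕ :=
  if h : ∃ rc : ℕ × ℕ, CrossAt n P rc.1 rc.2 p q then (Classical.choose h).1 else 0

/-- The Lehmer tableau `Φ(P) = Λ(Θ(P))` of a pipe dream. -/
def phi (n : ℕ) (P : ℕ → ℕ → Bool) (i j : ℕ) : ℕ := lehmer (theta n P) i j

/-- Cover relation of the chute move order. -/
def chuteCovBy {n : ℕ} (w : Equiv.Perm (Fin n)) (P Q : RPD w) : Prop :=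
  chuteLE w P Q ∧ P ≠ Q ∧ ∀ R, chuteLE w P R → chuteLE w R Q → R = P ∨ R = Q

/-- The interval `[P, Q]` in the chute move order. -/
def chuteIcc {n : ℕ} (w : Equiv.Perm (Fin n)) (P Q : RPD w) : Set (RPD w) :=
  { R | chuteLE w P R ∧ chuteLE w R Q }

/-- A chain in the chute move order. -/
def chuteChain {n : ℕ} (w : Equiv.Perm (Fin n)) (C : Set (RPD w)) : Prop :=
  ∀ x ∈ C, ∀ y ∈ C, chuteLE w x y ∨ chuteLE w y x

/-- `[P,Q]` is a polygon: an interval of cardinality at least 4 that is the union of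
two chains whose intersection is `{P, Q}`. -/
def IsPolygon {n : ℕ} (w : Equiv.Perm (Fin n)) (P Q : RPD w) : Prop :=
  chuteLE w P Q ∧ 4 ≤ (chuteIcc w P Q).ncard ∧
    ∃ C₁ C₂ : Set (RPD w), chuteChain w C₁ ∧ chuteChain w C₂ ∧
      C₁ ∪ C₂ = chuteIcc w P Q ∧ C₁ ∩ C₂ = {P, Q}

/-- `m` is the meet (greatest lower bound) of `P` and `Q` in the chute move order. -/
def IsMeetOf {n : ℕ} (w : Equiv.Perm (Fin n)) (m P Q : RPD w) : Prop :=
  chuteLE w m P ∧ chuteLE w m Q ∧ ∀ r, chuteLE w r P → chuteLE w r Q → chuteLE w r m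

/-- `s` is the join (least upper bound) of `P` and `Q` in the chute move order. -/
def IsJoinOf {n : ℕ} (w : Equiv.Perm (Fin n)) (s P Q : RPD w) : Prop :=
  chuteLE w P s ∧ chuteLE w Q s ∧ ∀ r, chuteLE w P r → chuteLE w Q r → chuteLE w s r

/-! Transposing a pipe dream reverses the direction in which its pipes are traced: the label
that `Pᵀ` carries across an edge is the column at which the corresponding pipe of `P` leaves
the top of the staircase. Pipe `r` of `P ∈ PD(w)` leaves at column `w⁻¹(r)`, so `Pᵀ ∈ PD(w⁻¹)`,
and since the exit column determines the pipe, two pipes crossing twice in `Pᵀ` would cross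
twice in `P`. A chute move `P → Q` in a rectangle is undone by the chute move `Qᵀ → Pᵀ` in the
transposed rectangle, so the involution `P ↦ Pᵀ` reverses the chute order. -/

open Function (swap)

lemma permVal_leftInvOn {n : ℕ} (w : Equiv.Perm (Fin n)) :
    Set.LeftInvOn (permVal w) (permVal w⁻¹) (Set.Icc 1 n) := by
  rintro r ⟨hr₁, hr₂⟩
  have hval : permVal w⁻¹ r = (w⁻¹ ⟨r - 1, by omega⟩ : ℕ) + 1 := dif_pos ⟨hr₁, hr₂⟩
  have hlt := (w⁻¹ ⟨r - 1, by omega⟩).isLt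
  rw [hval, permVal, dif_pos ⟨by omega, by omega⟩]
  simp only [Nat.add_sub_cancel, Fin.eta, Equiv.Perm.coe_inv, Equiv.apply_symm_apply]
  omega

lemma permVal_mem_Icc {n : ℕ} (w : Equiv.Perm (Fin n)) {j : ℕ} (hj : j ∈ Set.Icc 1 n) :
    permVal w j ∈ Set.Icc 1 n := by
  rw [permVal, dif_pos (show 1 ≤ j ∧ j ≤ n from hj)]
  exact ⟨by omega, (w _).isLt⟩

mutual
/-- The column at which the pipe of `P` entering box `(i,j)` through its west edge (for
`exitFromSouth`, its south edge) leaves the top of the staircase, reached as row `0`. -/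
def exitFromWest (n : ℕ) (P : ℕ → ℕ → Bool) (i j : ℕ) : ℕ :=
  if i + j ≤ n ∧ P i j = true then exitFromWest n P i (j + 1) else exitFromSouth n P (i - 1) j
termination_by 2 * i + 2 * (n + 1 - j) + 1
decreasing_by all_goals omega

def exitFromSouth (n : ℕ) (P : ℕ → ℕ → Bool) (i j : ℕ) : ℕ :=
  if i = 0 then j
  else if i + j ≤ n ∧ P i j = false then exitFromWest n P i (j + 1)
  else exitFromSouth n P (i - 1) j
termination_by 2 * i + 2 * (n + 1 - j)
decreasing_by all_goals omega
end

section Exits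

variable {n : ℕ} {P : ℕ → ℕ → Bool} {i j : ℕ}

lemma exitFromWest_of_cross (h : i + j ≤ n) (hP : P i j = true) :
    exitFromWest n P i j = exitFromWest n P i (j + 1) := by
  rw [exitFromWest, if_pos ⟨h, hP⟩]

lemma exitFromWest_of_not_cross (h : ¬(i + j ≤ n ∧ P i j = true)) :
    exitFromWest n P i j = exitFromSouth n P (i - 1) j := by
  rw [exitFromWest, if_neg h]

@[simp]
lemma exitFromSouth_zero : exitFromSouth n P 0 j = j := by
  rw [exitFromSouth, if_pos rfl]

lemma exitFromSouth_of_bump (hi : i ≠ 0) (h : i + j ≤ n) (hP : P i j = false) :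
    exitFromSouth n P i j = exitFromWest n P i (j + 1) := by
  rw [exitFromSouth, if_neg hi, if_pos ⟨h, hP⟩]

lemma exitFromSouth_of_not_bump (hi : i ≠ 0) (h : ¬(i + j ≤ n ∧ P i j = false)) :
    exitFromSouth n P i j = exitFromSouth n P (i - 1) j := by
  rw [exitFromSouth, if_neg hi, if_neg h]

end Exits

section Labels

variable {n : ℕ} {P : ℕ → ℕ → Bool} {i j : ℕ}

lemma westLabel_of_le_one (hj : j ≤ 1) : westLabel n P i j = i := by
  rw [westLabel, if_pos hj]

lemma westLabel_succ (hj : 1 ≤ j) : westLabel n P i (j + 1) = (labels n P i j).2 := by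
  rw [westLabel, if_neg (by omega), Nat.add_sub_cancel]

lemma labels_of_cross (h : i + j ≤ n) (hP : P i j = true) :
    labels n P i j = (southLabel n P i j, westLabel n P i j) := by
  rw [labels]; simp only [dif_pos h, hP, if_true]; rfl

lemma labels_of_bump (h : i + j ≤ n) (hP : P i j = false) :
    labels n P i j = (westLabel n P i j, southLabel n P i j) := by
  rw [labels]; simp only [dif_pos h, hP]; rfl

lemma labels_of_not_le (h : ¬i + j ≤ n) :
    labels n P i j = (westLabel n P i j, westLabel n P i j) := by
  rw [labels]; simp only [dif_neg h]; rfl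

end Labels

section Transpose

variable {n : ℕ} {P : ℕ → ℕ → Bool}

theorem labels_swap {i j : ℕ} (hj : 1 ≤ j) :
    labels n (swap P) i j = (exitFromWest n P j i, exitFromSouth n P j i) := by
  have hwest : westLabel n (swap P) i j = exitFromSouth n P (j - 1) i := by
    obtain rfl | hj2 := (by omega : j = 1 ∨ 2 ≤ j)
    · simp [westLabel_of_le_one]
    · obtain ⟨k, rfl⟩ : ∃ k, j = k + 1 := ⟨j - 1, by omega⟩
      rw [westLabel_succ (by omega), labels_swap (by omega), Nat.add_sub_cancel]
  by_cases h : i + j ≤ n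
  · have hsouth : southLabel n (swap P) i j = exitFromWest n P j (i + 1) := by
      rw [southLabel, labels_swap hj]
    cases hP : P j i
    · rw [labels_of_bump h hP, hwest, hsouth,
        exitFromWest_of_not_cross (i := j) (j := i) (by simp [hP]),
        exitFromSouth_of_bump (i := j) (j := i) (by omega) (by omega) hP]
    · rw [labels_of_cross h hP, hwest, hsouth,
        exitFromWest_of_cross (i := j) (j := i) (by omega) hP,
        exitFromSouth_of_not_bump (i := j) (j := i) (by omega) (by simp [hP])]
  · rw [labels_of_not_le h, hwest, exitFromWest_of_not_cross (i := j) (j := i) (by omega),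
      exitFromSouth_of_not_bump (i := j) (j := i) (by omega) (by omega)]
termination_by (n + 1 - i) + j
decreasing_by all_goals omega

mutual
theorem exitFromWest_westLabel {i j : ℕ} (hi : 1 ≤ i) (hj : 1 ≤ j) (h : i + j ≤ n + 1) :
    exitFromWest n P (westLabel n P i j) 1 = exitFromWest n P i j := by
  obtain rfl | hj2 := (by omega : j = 1 ∨ 2 ≤ j)
  · rw [westLabel_of_le_one le_rfl]
  obtain ⟨k, rfl⟩ : ∃ k, j = k + 1 := ⟨j - 1, by omega⟩
  rw [westLabel_succ (by omega)]
  cases hP : P i k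
  · rw [labels_of_bump (by omega) hP, southLabel, ← northLabel,
      exitFromWest_northLabel (by omega) (by omega) (by omega), Nat.add_sub_cancel,
      exitFromSouth_of_bump (by omega) (by omega) hP]
  · rw [labels_of_cross (by omega) hP, exitFromWest_westLabel hi (by omega) (by omega),
      exitFromWest_of_cross (by omega) hP]
termination_by 2 * ((n + 1 - i) + j)
decreasing_by all_goals omega

theorem exitFromWest_northLabel {i j : ℕ} (hi : 1 ≤ i) (hj : 1 ≤ j) (h : i + j ≤ n + 1) :
    exitFromWest n P (northLabel n P i j) 1 = exitFromSouth n P (i - 1) j := by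
  by_cases hc : i + j ≤ n ∧ P i j = true
  · rw [northLabel, labels_of_cross hc.1 hc.2, southLabel, ← northLabel,
      exitFromWest_northLabel (by omega) hj (by omega), Nat.add_sub_cancel,
      exitFromSouth_of_not_bump (by omega) (by simp [hc.2])]
  · have hnorth : northLabel n P i j = westLabel n P i j := by
      by_cases h' : i + j ≤ n
      · rw [northLabel, labels_of_bump h' (by simpa [h'] using hc)]
      · rw [northLabel, labels_of_not_le h']
    rw [hnorth, exitFromWest_westLabel hi hj h, exitFromWest_of_not_cross hc]
termination_by 2 * ((n + 1 - i) + j) + 1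
decreasing_by all_goals omega
end

mutual
theorem westLabel_mem_Icc {i j : ℕ} (hi : 1 ≤ i) (hj : 1 ≤ j) (h : i + j ≤ n + 1) :
    westLabel n P i j ∈ Set.Icc 1 n := by
  obtain rfl | hj2 := (by omega : j = 1 ∨ 2 ≤ j)
  · rw [westLabel_of_le_one le_rfl]; exact ⟨hi, by omega⟩
  obtain ⟨k, rfl⟩ : ∃ k, j = k + 1 := ⟨j - 1, by omega⟩
  rw [westLabel_succ (by omega)]
  cases hP : P i k
  · rw [labels_of_bump (by omega) hP]
    exact northLabel_mem_Icc (by omega) (by omega) (by omega)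
  · rw [labels_of_cross (by omega) hP]
    exact westLabel_mem_Icc hi (by omega) (by omega)
termination_by 2 * ((n + 1 - i) + j)
decreasing_by all_goals omega

theorem northLabel_mem_Icc {i j : ℕ} (hi : 1 ≤ i) (hj : 1 ≤ j) (h : i + j ≤ n + 1) :
    northLabel n P i j ∈ Set.Icc 1 n := by
  by_cases hc : i + j ≤ n ∧ P i j = true
  · rw [northLabel, labels_of_cross hc.1 hc.2]
    exact northLabel_mem_Icc (by omega) hj (by omega)
  · by_cases h' : i + j ≤ n
    · rw [northLabel, labels_of_bump h' (by simpa [h'] using hc)]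
      exact westLabel_mem_Icc hi hj h
    · rw [northLabel, labels_of_not_le h']
      exact westLabel_mem_Icc hi hj h
termination_by 2 * ((n + 1 - i) + j) + 1
decreasing_by all_goals omega
end

end Transpose

section PipeDream

variable {n : ℕ} {w : Equiv.Perm (Fin n)} {P : ℕ → ℕ → Bool}

lemma exitFromWest_one_of_isPD (hPD : IsPD w P) {r : ℕ} (hr : r ∈ Set.Icc 1 n) :
    exitFromWest n P r 1 = permVal w⁻¹ r := by
  obtain ⟨hj₁, hj₂⟩ := permVal_mem_Icc w⁻¹ hr
  have h := exitFromWest_northLabel (n := n) (P := P) le_rfl hj₁ (by omega)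
  rwa [hPD.2 _ hj₁ hj₂, permVal_leftInvOn w hr, Nat.sub_self, exitFromSouth_zero] at h

lemma isPD_swap (hPD : IsPD w P) : IsPD w⁻¹ (swap P) := by
  refine ⟨fun i j hP => ?_, fun j hj₁ hj₂ => ?_⟩
  · obtain ⟨_, _, _⟩ := hPD.1 j i hP
    omega
  · rw [northLabel, labels_swap hj₁]
    exact exitFromWest_one_of_isPD hPD ⟨hj₁, hj₂⟩

lemma exists_crossAt_of_crossAt_swap {i j p q : ℕ} (h : CrossAt n (swap P) i j p q) :
    ∃ p' q', CrossAt n P j i p' q' ∧ p' ∈ Set.Icc 1 n ∧ q' ∈ Set.Icc 1 n ∧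
      exitFromWest n P p' 1 = p ∧ exitFromWest n P q' 1 = q := by
  obtain ⟨hi, hj, hij, hP, hpq⟩ := h
  have hW := westLabel_mem_Icc (n := n) (P := P) hj hi (by omega)
  have hS := northLabel_mem_Icc (n := n) (P := P) (i := j + 1) (by omega) hi (by omega)
  have hlabels := labels_swap (n := n) (P := P) (i := i) hj
  rw [labels_of_cross hij hP, Prod.mk.injEq] at hlabels
  have hexitW : exitFromWest n P (westLabel n P j i) 1 = southLabel n (swap P) i j := by
    rw [exitFromWest_westLabel hj hi (by omega), hlabels.1]
  have hexitS : exitFromWest n P (southLabel n P j i) 1 = westLabel n (swap P) i j := by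
    rw [southLabel, ← northLabel, exitFromWest_northLabel (by omega) hi (by omega),
      Nat.add_sub_cancel, hlabels.2]
  rcases hpq with ⟨rfl, rfl⟩ | ⟨rfl, rfl⟩
  · exact ⟨_, _, ⟨hj, hi, by omega, hP, .inr ⟨rfl, rfl⟩⟩, hS, hW, hexitS, hexitW⟩
  · exact ⟨_, _, ⟨hj, hi, by omega, hP, .inl ⟨rfl, rfl⟩⟩, hW, hS, hexitW, hexitS⟩

lemma injOn_exitFromWest_one (hPD : IsPD w P) :
    Set.InjOn (exitFromWest n P · 1) (Set.Icc 1 n) := fun r hr r' hr' h => by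
  simp only [exitFromWest_one_of_isPD hPD hr, exitFromWest_one_of_isPD hPD hr'] at h
  exact (permVal_leftInvOn w).injOn hr hr' h

lemma reduced_swap (hPD : IsPD w P) (hred : Reduced n P) : Reduced n (swap P) := by
  intro p q i j i' j' h h'
  obtain ⟨p₁, q₁, h₁, hp₁, hq₁, rfl, rfl⟩ := exists_crossAt_of_crossAt_swap h
  obtain ⟨p₂, q₂, h₂, hp₂, hq₂, hp, hq⟩ := exists_crossAt_of_crossAt_swap h'
  obtain rfl := injOn_exitFromWest_one hPD hp₂ hp₁ hp
  obtain rfl := injOn_exitFromWest_one hPD hq₂ hq₁ hq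
  exact (hred _ _ _ _ _ _ h₁ h₂).symm

end PipeDream

lemma chuteStep_swap {n : ℕ} {P Q : ℕ → ℕ → Bool} (h : ChuteStep n P Q) :
    ChuteStep n (swap Q) (swap P) := by
  obtain ⟨a, b, c, d, ⟨ha, hab, hc, hcd, hbd, hac, hbc, hbd', hcross⟩, rfl⟩ := h
  have had : P a d = true := hcross a d le_rfl hab.le hcd.le le_rfl (by omega) (by omega) (by omega)
  refine ⟨c, d, a, b, ⟨hc, hcd, ha, hab, by omega, ?_, ?_, ?_, ?_⟩, ?_⟩ <;>
    simp only [funext_iff, swap, chuteResult] <;> grind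

lemma chuteLE_swap {n : ℕ} {u v : Equiv.Perm (Fin n)} (f : RPD u → RPD v)
    (hf : ∀ X, (f X).1 = swap X.1) {X Y : RPD u} (h : chuteLE u X Y) :
    chuteLE v (f Y) (f X) :=
  Relation.reflTransGen_swap.mp <| h.lift f fun A B hAB => by
    change ChuteStep n (f B).1 (f A).1
    rw [hf, hf]
    exact chuteStep_swap hAB

/-- the transpose map `P ↦ Pᵀ` is a poset anti-isomorphism from the
chute move poset `PD(w)` to the chute move poset `PD(w⁻¹)`. -/
theorem transpose_anti_isomorphism {n : ℕ} (w : Equiv.Perm (Fin n)) :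
    ∃ t : RPD w → RPD w⁻¹, Function.Bijective t ∧
      (∀ P : RPD w, (t P).1 = fun i j => P.1 j i) ∧
      ∀ P Q : RPD w, chuteLE w P Q ↔ chuteLE w⁻¹ (t Q) (t P) := by
  let t : RPD w → RPD w⁻¹ := fun P => ⟨swap P.1, isPD_swap P.2.1, reduced_swap P.2.1 P.2.2⟩
  let s : RPD w⁻¹ → RPD w := fun Q =>
    ⟨swap Q.1, by simpa only [inv_inv] using isPD_swap Q.2.1, reduced_swap Q.2.1 Q.2.2⟩
  have hst : ∀ P, s (t P) = P := fun P => rfl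
  refine ⟨t, Function.bijective_iff_has_inverse.mpr ⟨s, hst, fun Q => rfl⟩, fun P => rfl,
    fun P Q => ⟨chuteLE_swap t fun _ => rfl, fun h => ?_⟩⟩
  simpa only [hst] using chuteLE_swap s (fun _ => rfl) h
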